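/- For all positive integers d, δ and every integer g ≥ 1 one has Σ_{ω ∣ gcd(d,δ)} J₂(ω) · σ_{2g−1}(d/ω) = Σ_{l ∣ d} (d/l)^{2g−1} · gcd(l,δ)², where both sums range over positive divisors, σ_m(k) = Σ_{j ∣ k} j^m is the m-th power sum-of-divisors function, and J₂(m) denotes the number of elements of additive order exactly m in (ℤ/mℤ)². -/

import Mathlib

/-! Sorting the elements of `(ℤ/nℤ)²` by their order gives `∑_{ω ∣ n} J₂(ω) = n²`: for `ω ∣ n`
the elements of order `ω` lie in the `ω`-torsion subgroup, which is a copy of `(ℤ/ωℤ)²`.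
Hence, with `J` the arithmetic function equal to `J₂` on the divisors of `δ` and `0` elsewhere,
`gcd(l, δ)² = (ζ * J)(l)`, and the identity is the `d`-th coefficient of the Dirichlet-ring identity
`J * σ_m = J * (ζ * pow m) = pow m * (ζ * J)`. -/

noncomputable def J2 (m : ℕ) : ℕ := Nat.card {x : ZMod m × ZMod m // addOrderOf x = m}

def sigmaFn (m k : ℕ) : ℕ := ∑ j ∈ k.divisors, j ^ m

open ArithmeticFunction Finset
open scoped ArithmeticFunction.zeta ArithmeticFunction.sigma

theorem Nat.filter_dvd_divisors_eq_divisors_gcd {d : ℕ} (hd : d ≠ 0) (δ : ℕ) :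
    {ω ∈ d.divisors | ω ∣ δ} = (d.gcd δ).divisors := by
  ext ω
  simp only [Finset.mem_filter, Nat.mem_divisors, Nat.dvd_gcd_iff]
  exact ⟨fun ⟨⟨hωd, _⟩, hωδ⟩ ↦ ⟨⟨hωd, hωδ⟩, Nat.gcd_ne_zero_left hd⟩,
    fun ⟨⟨hωd, hωδ⟩, _⟩ ↦ ⟨⟨hωd, hd⟩, hωδ⟩⟩

theorem Nat.card_addOrderOf_eq_of_injective {G H : Type*} [AddGroup G] [AddGroup H]
    (f : G →+ H) (hf : Function.Injective f) {ω : ℕ} (hrange : ∀ y : H, ω • y = 0 → y ∈ f.range) :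
    Nat.card {x : G // addOrderOf x = ω} = Nat.card {y : H // addOrderOf y = ω} := by
  refine Nat.card_eq_of_bijective (fun x ↦ ⟨f x, (addOrderOf_injective f hf x).trans x.2⟩)
    ⟨fun x x' h ↦ Subtype.ext (hf (congrArg Subtype.val h)), fun ⟨y, hy⟩ ↦ ?_⟩
  obtain ⟨x, rfl⟩ := hrange y (hy ▸ addOrderOf_nsmul_eq_zero y)
  exact ⟨⟨x, (addOrderOf_injective f hf x).symm.trans hy⟩, rfl⟩

namespace ZMod

section multiplesHom

def multiplesHom {H : Type*} [AddGroup H] (ω : ℕ) (a : H) (ha : ω • a = 0) : ZMod ω →+ H :=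
  lift ω ⟨zmultiplesHom H a, by simpa using ha⟩

variable {H : Type*} [AddGroup H] {ω : ℕ} {a : H}

theorem multiplesHom_intCast (ha : ω • a = 0) (k : ℤ) : multiplesHom ω a ha k = k • a :=
  lift_coe _ _ k

theorem multiplesHom_injective (ha : ω • a = 0) (h : addOrderOf a = ω) :
    Function.Injective (multiplesHom ω a ha) := by
  rw [injective_iff_map_eq_zero]
  intro x hx
  obtain ⟨k, rfl⟩ := intCast_surjective x
  rw [multiplesHom_intCast, ← addOrderOf_dvd_iff_zsmul_eq_zero, h] at hx
  exact (intCast_zmod_eq_zero_iff_dvd k ω).2 hx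

end multiplesHom

section natCast_div

variable {n ω : ℕ}

theorem addOrderOf_natCast_div (hn : n ≠ 0) (hω : ω ∣ n) :
    addOrderOf ((n / ω : ℕ) : ZMod n) = ω := by
  rw [addOrderOf_coe _ hn, Nat.gcd_eq_right (Nat.div_dvd_of_dvd hω), Nat.div_div_self hω hn]

theorem exists_natCast_div_nsmul_of_nsmul_eq_zero (hn : n ≠ 0) (hω : ω ∣ n) {y : ZMod n}
    (hy : ω • y = 0) : ∃ k : ℕ, k • ((n / ω : ℕ) : ZMod n) = y := by
  have : NeZero n := ⟨hn⟩
  have hω0 : ω ≠ 0 := ne_zero_of_dvd_ne_zero hn hω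
  rw [← natCast_zmod_val y, nsmul_eq_mul, ← Nat.cast_mul, natCast_eq_zero_iff] at hy
  obtain ⟨k, hk⟩ : n / ω ∣ y.val :=
    Nat.dvd_of_mul_dvd_mul_left (Nat.pos_of_ne_zero hω0) (by rwa [Nat.mul_div_cancel' hω])
  exact ⟨k, by rw [nsmul_eq_mul, ← Nat.cast_mul, mul_comm, ← hk, natCast_zmod_val]⟩

end natCast_div

end ZMod

-- `ZMod 0 = ℤ`, and `ℤ²` has infinitely many elements of infinite order, so `Nat.card` is `0`.
theorem J2_zero : J2 0 = 0 := by
  have : Infinite {x : ZMod 0 × ZMod 0 // addOrderOf x = 0} := by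
    refine Infinite.of_injective (fun k : ℕ ↦ ⟨((k : ℤ), 1), ?_⟩) fun k k' h ↦ ?_
    · rw [addOrderOf_eq_zero_iff']
      intro n hn
      simp [Prod.ext_iff, hn.ne']
    · exact Int.ofNat.inj (congrArg (fun x ↦ x.1.1) h)
  exact Nat.card_eq_zero_of_infinite

theorem card_addOrderOf_eq_J2 {n ω : ℕ} (hn : n ≠ 0) (hω : ω ∣ n) :
    Nat.card {x : ZMod n × ZMod n // addOrderOf x = ω} = J2 ω := by
  have ha : ω • ((n / ω : ℕ) : ZMod n) = 0 := by
    rw [nsmul_eq_mul, ← Nat.cast_mul, Nat.mul_div_cancel' hω, ZMod.natCast_self]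
  set e := ZMod.multiplesHom ω _ ha
  have he : Function.Injective e :=
    ZMod.multiplesHom_injective ha (ZMod.addOrderOf_natCast_div hn hω)
  have hrange (y : ZMod n) (hy : ω • y = 0) : y ∈ e.range := by
    obtain ⟨k, rfl⟩ := ZMod.exists_natCast_div_nsmul_of_nsmul_eq_zero hn hω hy
    exact ⟨k, by simpa [e] using ZMod.multiplesHom_intCast ha k⟩
  refine (Nat.card_addOrderOf_eq_of_injective (e.prodMap e) (he.prodMap he) ?_).symm
  rintro ⟨y₁, y₂⟩ hy
  obtain ⟨x₁, rfl⟩ := hrange y₁ (congrArg Prod.fst hy)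
  obtain ⟨x₂, rfl⟩ := hrange y₂ (congrArg Prod.snd hy)
  exact ⟨(x₁, x₂), rfl⟩

theorem sum_divisors_J2 {n : ℕ} (hn : n ≠ 0) : ∑ ω ∈ n.divisors, J2 ω = n ^ 2 := by
  classical
  have : NeZero n := ⟨hn⟩
  have hmaps : ∀ x ∈ (univ : Finset (ZMod n × ZMod n)), addOrderOf x ∈ n.divisors :=
    fun x _ ↦ Nat.mem_divisors.2
      ⟨addOrderOf_dvd_of_nsmul_eq_zero (by ext <;> simp : n • x = 0), hn⟩
  calc ∑ ω ∈ n.divisors, J2 ω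
      = ∑ ω ∈ n.divisors, #{x : ZMod n × ZMod n | addOrderOf x = ω} :=
        Finset.sum_congr rfl fun ω hω ↦ by
          rw [← card_addOrderOf_eq_J2 hn (Nat.dvd_of_mem_divisors hω),
            Nat.card_eq_fintype_card, Fintype.card_subtype]
    _ = n ^ 2 := by
        rw [← Finset.card_eq_sum_card_fiberwise hmaps]
        simp [sq]

noncomputable def jordanTwoOnDivisors (δ : ℕ) : ArithmeticFunction ℕ :=
  ⟨fun ω ↦ if ω ∣ δ then J2 ω else 0, by simp [J2_zero]⟩

theorem jordanTwoOnDivisors_apply (δ ω : ℕ) :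
    jordanTwoOnDivisors δ ω = if ω ∣ δ then J2 ω else 0 := rfl

theorem zeta_mul_jordanTwoOnDivisors_apply {l : ℕ} (hl : l ≠ 0) (δ : ℕ) :
    (ζ * jordanTwoOnDivisors δ) l = l.gcd δ ^ 2 := by
  rw [zeta_mul_apply, ← sum_divisors_J2 (Nat.gcd_ne_zero_left hl),
    ← Nat.filter_dvd_divisors_eq_divisors_gcd hl, sum_filter]
  rfl

theorem jordanTwoOnDivisors_mul_sigma_apply {d : ℕ} (hd : d ≠ 0) (δ m : ℕ) :
    (jordanTwoOnDivisors δ * σ m) d = ∑ ω ∈ (d.gcd δ).divisors, J2 ω * sigmaFn m (d / ω) := by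
  rw [mul_apply, Nat.sum_divisorsAntidiagonal (fun a b ↦ jordanTwoOnDivisors δ a * σ m b),
    ← Nat.filter_dvd_divisors_eq_divisors_gcd hd, sum_filter]
  simp only [jordanTwoOnDivisors_apply, ite_mul, zero_mul, sigmaFn, sigma_apply]

theorem pow_mul_zeta_mul_jordanTwoOnDivisors_apply (d δ m : ℕ) :
    (pow m * (ζ * jordanTwoOnDivisors δ)) d = ∑ l ∈ d.divisors, (d / l) ^ m * l.gcd δ ^ 2 := by
  rw [mul_apply, Nat.sum_divisorsAntidiagonal' (fun a b ↦ pow m a * (ζ * jordanTwoOnDivisors δ) b)]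
  refine sum_congr rfl fun l hl ↦ ?_
  have hdl : d / l ≠ 0 := (Nat.div_pos (Nat.divisor_le hl) (Nat.pos_of_mem_divisors hl)).ne'
  rw [pow_apply, if_neg (fun h ↦ hdl h.2),
    zeta_mul_jordanTwoOnDivisors_apply (Nat.pos_of_mem_divisors hl).ne']

theorem mul_sigma_eq_pow_mul_zeta_mul (f : ArithmeticFunction ℕ) (m : ℕ) :
    f * σ m = pow m * (ζ * f) := by
  rw [← zeta_mul_pow_eq_sigma]
  ring

theorem sum_J2_sigma_pow_eq_sum_gcd_sq_general (d δ g : ℕ) :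
    ∑ ω ∈ (Nat.gcd d δ).divisors, J2 ω * sigmaFn (2 * g - 1) (d / ω)
      = ∑ l ∈ d.divisors, (d / l) ^ (2 * g - 1) * Nat.gcd l δ ^ 2 := by
  rcases eq_or_ne d 0 with rfl | hd
  · simp [sigmaFn]
  rw [← jordanTwoOnDivisors_mul_sigma_apply hd, mul_sigma_eq_pow_mul_zeta_mul,
    pow_mul_zeta_mul_jordanTwoOnDivisors_apply]

/-- `Σ_{ω ∣ gcd(d,δ)} J₂(ω)·σ_{2g−1}(d/ω) = Σ_{l ∣ d} (d/l)^{2g−1}·gcd(l,δ)²`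
for every `g ≥ 1`. -/
theorem sum_J2_sigma_pow_eq_sum_gcd_sq (d δ g : ℕ) (hd : 0 < d) (hδ : 0 < δ)
    (hg : 1 ≤ g) :
    ∑ ω ∈ (Nat.gcd d δ).divisors, J2 ω * sigmaFn (2 * g - 1) (d / ω)
      = ∑ l ∈ d.divisors, (d / l) ^ (2 * g - 1) * Nat.gcd l δ ^ 2 :=
  sum_J2_sigma_pow_eq_sum_gcd_sq_general d δ g
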